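/- arXiv:1202.2667 — 3 statements merged into one kernel-verified Lean document; each statement's English description precedes it below -/
import Mathlib

section
/- For every smooth solution u of the BBM equation u_t - u_{txx} + u_x + u u_x = 0 on the torus, the quantity ∫_𝕋 (u³ + 3u²) dx is constant in time. -/
open Real

noncomputable section BBMAux

/-- partial derivative in the first (space) variable -/
def px (f : ℝ × ℝ → ℝ) : ℝ × ℝ → ℝ := fun p => fderiv ℝ f p (1, 0)

/-- partial derivative in the second (time) variable -/
def pt (f : ℝ × ℝ → ℝ) : ℝ × ℝ → ℝ := fun p => fderiv ℝ f p (0, 1)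

lemma contDiff_px {f : ℝ × ℝ → ℝ} (hf : ContDiff ℝ (⊤ : ℕ∞) f) : ContDiff ℝ (⊤ : ℕ∞) (px f) :=
  (hf.fderiv_right (by simp)).clm_apply contDiff_const

lemma contDiff_pt {f : ℝ × ℝ → ℝ} (hf : ContDiff ℝ (⊤ : ℕ∞) f) : ContDiff ℝ (⊤ : ℕ∞) (pt f) :=
  (hf.fderiv_right (by simp)).clm_apply contDiff_const

lemma hasDerivAt_slice_x {f : ℝ × ℝ → ℝ} (hf : ContDiff ℝ (⊤ : ℕ∞) f) (x t : ℝ) :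
    HasDerivAt (fun y => f (y, t)) (px f (x, t)) x := by
  have hg : HasDerivAt (fun y : ℝ => ((y, t) : ℝ × ℝ)) ((1 : ℝ), (0 : ℝ)) x :=
    (hasDerivAt_id x).prodMk (hasDerivAt_const x t)
  exact (hf.differentiable (by simp) (x, t)).hasFDerivAt.comp_hasDerivAt x hg

lemma hasDerivAt_slice_t {f : ℝ × ℝ → ℝ} (hf : ContDiff ℝ (⊤ : ℕ∞) f) (x t : ℝ) :
    HasDerivAt (fun s => f (x, s)) (pt f (x, t)) t := by
  have hg : HasDerivAt (fun s : ℝ => ((x, s) : ℝ × ℝ)) ((0 : ℝ), (1 : ℝ)) t :=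
    (hasDerivAt_const t x).prodMk (hasDerivAt_id t)
  exact (hf.differentiable (by simp) (x, t)).hasFDerivAt.comp_hasDerivAt t hg

/-- Clairaut's theorem in this setting. -/
lemma px_pt_comm {f : ℝ × ℝ → ℝ} (hf : ContDiff ℝ (⊤ : ℕ∞) f) (p : ℝ × ℝ) :
    px (pt f) p = pt (px f) p := by
  have hder : ContDiff ℝ (⊤ : ℕ∞) (fderiv ℝ f) := hf.fderiv_right (by simp)
  have hdiff : DifferentiableAt ℝ (fderiv ℝ f) p := hder.differentiable (by simp) p
  have key : ∀ v w : ℝ × ℝ,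
      fderiv ℝ (fun q => fderiv ℝ f q v) p w = fderiv ℝ (fderiv ℝ f) p w v := by
    intro v w
    rw [fderiv_clm_apply hdiff (differentiableAt_const v)]
    simp
  have sym : fderiv ℝ (fderiv ℝ f) p ((1 : ℝ), (0 : ℝ)) ((0 : ℝ), (1 : ℝ)) =
      fderiv ℝ (fderiv ℝ f) p ((0 : ℝ), (1 : ℝ)) ((1 : ℝ), (0 : ℝ)) :=
    second_derivative_symmetric (fun y => (hf.differentiable (by simp) y).hasFDerivAt)
      hdiff.hasFDerivAt _ _
  show fderiv ℝ (fun q => fderiv ℝ f q ((0:ℝ), (1:ℝ))) p (1, 0)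
      = fderiv ℝ (fun q => fderiv ℝ f q ((1:ℝ), (0:ℝ))) p (0, 1)
  rw [key, key, sym]

/-- `px` preserves `2π`-periodicity in the first variable (for smooth `f`). -/
lemma px_periodic {f : ℝ × ℝ → ℝ} (hf : ContDiff ℝ (⊤ : ℕ∞) f)
    (hp : ∀ x t, f (x + 2 * π, t) = f (x, t)) (x t : ℝ) :
    px f (x + 2 * π, t) = px f (x, t) := by
  have h1 : px f (x + 2 * π, t) = deriv (fun y => f (y, t)) (x + 2 * π) :=
    (hasDerivAt_slice_x hf (x + 2 * π) t).deriv.symm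
  have h2 : px f (x, t) = deriv (fun y => f (y, t)) x :=
    (hasDerivAt_slice_x hf x t).deriv.symm
  rw [h1, h2, ← deriv_comp_add_const (fun y => f (y, t)) (2 * π) x]
  congr 1
  funext y
  exact hp y t

/-- `pt` preserves `2π`-periodicity in the first variable (for smooth `f`). -/
lemma pt_periodic {f : ℝ × ℝ → ℝ} (hf : ContDiff ℝ (⊤ : ℕ∞) f)
    (hp : ∀ x t, f (x + 2 * π, t) = f (x, t)) (x t : ℝ) :
    pt f (x + 2 * π, t) = pt f (x, t) := by
  have h1 : pt f (x + 2 * π, t) = deriv (fun s => f (x + 2 * π, s)) t :=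
    (hasDerivAt_slice_t hf (x + 2 * π) t).deriv.symm
  have h2 : pt f (x, t) = deriv (fun s => f (x, s)) t :=
    (hasDerivAt_slice_t hf x t).deriv.symm
  rw [h1, h2]
  congr 1
  funext s
  exact hp x s

/-- The flux function for the third BBM invariant. -/
def Vf (U : ℝ × ℝ → ℝ) : ℝ × ℝ → ℝ := fun p =>
  3 * ((pt U p) ^ 2 - (px (pt U) p) ^ 2 + (U p + 1) ^ 2 * (px (pt U) p)
      - (1/4) * (U p + 1) ^ 4)
  - 3 * (px (pt U) p - U p - (1/2) * (U p) ^ 2)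

lemma Vf_periodic {U : ℝ × ℝ → ℝ} (hU : ContDiff ℝ (⊤ : ℕ∞) U)
    (hp : ∀ x t, U (x + 2 * π, t) = U (x, t)) (x t : ℝ) :
    Vf U (x + 2 * π, t) = Vf U (x, t) := by
  have h1 := pt_periodic hU hp x t
  have h2 := px_periodic (contDiff_pt hU) (pt_periodic hU hp) x t
  unfold Vf
  rw [h1, h2, hp x t]

/-- Space derivative of the flux equals the time derivative of the density,
pointwise, for solutions of BBM. -/
lemma Vf_slice {U : ℝ × ℝ → ℝ} (hU : ContDiff ℝ (⊤ : ℕ∞) U)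
    (hrel : ∀ p : ℝ × ℝ, pt U p = px (px (pt U)) p - px U p - U p * px U p)
    (x t : ℝ) :
    HasDerivAt (fun y => Vf U (y, t))
      ((3 * (U (x, t)) ^ 2 + 6 * U (x, t)) * pt U (x, t)) x := by
  have ha : HasDerivAt (fun y => U (y, t)) (px U (x, t)) x := hasDerivAt_slice_x hU x t
  have hb : HasDerivAt (fun y => pt U (y, t)) (px (pt U) (x, t)) x :=
    hasDerivAt_slice_x (contDiff_pt hU) x t
  have hc : HasDerivAt (fun y => px (pt U) (y, t)) (px (px (pt U)) (x, t)) x :=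
    hasDerivAt_slice_x (contDiff_px (contDiff_pt hU)) x t
  have key := ((((((hb.fun_pow 2).sub (hc.fun_pow 2)).add
      (((ha.add_const 1).fun_pow 2).mul hc)).sub
      (((ha.add_const 1).fun_pow 4).const_mul (1/4))).const_mul 3).sub
      ((((hc.sub ha).sub ((ha.fun_pow 2).const_mul (1/2)))).const_mul 3))
  have key' : HasDerivAt (fun y => Vf U (y, t)) _ x := key
  convert key' using 1
  linear_combination
    (-(6 * px (pt U) (x, t)) + 3 * (U (x, t) + 1) ^ 2 - 3) * hrel (x, t)

/-- Time derivative of the density. -/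
lemma density_slice {U : ℝ × ℝ → ℝ} (hU : ContDiff ℝ (⊤ : ℕ∞) U) (x t : ℝ) :
    HasDerivAt (fun s => (U (x, s)) ^ 3 + 3 * (U (x, s)) ^ 2)
      ((3 * (U (x, t)) ^ 2 + 6 * U (x, t)) * pt U (x, t)) t := by
  have h := hasDerivAt_slice_t hU x t
  have key := (h.fun_pow 3).fun_add ((h.fun_pow 2).const_mul 3)
  refine key.congr_deriv ?_
  ring

lemma bbm_key (U : ℝ × ℝ → ℝ) (hU : ContDiff ℝ (⊤ : ℕ∞) U)
    (hp : ∀ x t, U (x + 2 * π, t) = U (x, t))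
    (hrel : ∀ p : ℝ × ℝ, pt U p = px (px (pt U)) p - px U p - U p * px U p)
    (t₀ : ℝ) :
    HasDerivAt (fun s => ∫ x in (0:ℝ)..(2 * π), ((U (x, s)) ^ 3 + 3 * (U (x, s)) ^ 2))
      0 t₀ := by
  have hcU : Continuous U := hU.continuous
  have hcw : Continuous (pt U) := (contDiff_pt hU).continuous
  have hH : Continuous (fun p : ℝ × ℝ => (3 * (U p) ^ 2 + 6 * U p) * pt U p) :=
    ((continuous_const.mul (hcU.pow 2)).add (continuous_const.mul hcU)).mul hcw
  have hHs : ∀ s : ℝ, Continuous (fun x => (3 * (U (x, s)) ^ 2 + 6 * U (x, s)) * pt U (x, s)) :=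
    fun s => hH.comp (continuous_id.prodMk continuous_const)
  have hUs : ∀ s : ℝ, Continuous (fun x => U (x, s)) :=
    fun s => hcU.comp (continuous_id.prodMk continuous_const)
  have hGs : ∀ s : ℝ, Continuous (fun x => (U (x, s)) ^ 3 + 3 * (U (x, s)) ^ 2) :=
    fun s => ((hUs s).pow 3).add (continuous_const.mul ((hUs s).pow 2))
  -- the integral of the derivative in time vanishes, by FTC and periodicity
  have hzero : ∀ s : ℝ,
      (∫ x in (0:ℝ)..(2 * π), (3 * (U (x, s)) ^ 2 + 6 * U (x, s)) * pt U (x, s)) = 0 := by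
    intro s
    have hftc : (∫ x in (0:ℝ)..(2 * π), (3 * (U (x, s)) ^ 2 + 6 * U (x, s)) * pt U (x, s))
        = Vf U (2 * π, s) - Vf U (0, s) := by
      apply intervalIntegral.integral_eq_sub_of_hasDerivAt
        (f := fun y => Vf U (y, s))
        (f' := fun x => (3 * (U (x, s)) ^ 2 + 6 * U (x, s)) * pt U (x, s))
      · intro x _
        exact Vf_slice hU hrel x s
      · exact (hHs s).intervalIntegrable _ _
    have hper0 := Vf_periodic hU hp 0 s
    rw [zero_add] at hper0
    rw [hftc, hper0, sub_self]
  -- bound for differentiation under the integral sign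
  obtain ⟨C, hC⟩ :=
    ((isCompact_Icc (a := (0:ℝ)) (b := 2 * π)).prod
      (isCompact_Icc (a := t₀ - 1) (b := t₀ + 1))).exists_bound_of_continuousOn
      hH.continuousOn
  have h2π : (0:ℝ) ≤ 2 * π := by positivity
  have hbound : ∀ᵐ x ∂MeasureTheory.volume, x ∈ Set.uIoc (0:ℝ) (2 * π) →
      ∀ s ∈ Metric.ball t₀ 1,
        ‖(3 * (U (x, s)) ^ 2 + 6 * U (x, s)) * pt U (x, s)‖ ≤ C := by
    refine Filter.Eventually.of_forall fun x hx s hs => ?_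
    apply hC
    rw [Set.uIoc_of_le h2π] at hx
    rw [Metric.mem_ball, Real.dist_eq, abs_lt] at hs
    exact ⟨⟨hx.1.le, hx.2⟩, ⟨by linarith [hs.1], by linarith [hs.2]⟩⟩
  have hdiff : ∀ᵐ x ∂MeasureTheory.volume, x ∈ Set.uIoc (0:ℝ) (2 * π) →
      ∀ s ∈ Metric.ball t₀ 1,
        HasDerivAt (fun σ => (U (x, σ)) ^ 3 + 3 * (U (x, σ)) ^ 2)
          ((3 * (U (x, s)) ^ 2 + 6 * U (x, s)) * pt U (x, s)) s :=
    Filter.Eventually.of_forall fun x _ s _ => density_slice hU x s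
  have key := intervalIntegral.hasDerivAt_integral_of_dominated_loc_of_deriv_le
    (F := fun s x => (U (x, s)) ^ 3 + 3 * (U (x, s)) ^ 2)
    (F' := fun s x => (3 * (U (x, s)) ^ 2 + 6 * U (x, s)) * pt U (x, s))
    (x₀ := t₀) (a := 0) (b := 2 * π) (bound := fun _ => C) (s := Metric.ball t₀ 1) (Metric.ball_mem_nhds t₀ one_pos)
    (Filter.Eventually.of_forall fun s => (hGs s).aestronglyMeasurable)
    ((hGs t₀).intervalIntegrable _ _)
    ((hHs t₀).aestronglyMeasurable)
    hbound intervalIntegrable_const hdiff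
  rcases key with ⟨-, hkey⟩
  rw [hzero t₀] at hkey
  exact hkey

end BBMAux

/-- For every smooth (space-periodic) solution `u` of the BBM equation
`u_t - u_{txx} + u_x + u u_x = 0` on the torus, the quantity
`∫_𝕋 (u³ + 3u²) dx` is constant in time. -/
theorem bbm_third_invariant (u : ℝ → ℝ → ℝ)
    (hsmooth : ContDiff ℝ (⊤ : ℕ∞) (fun p : ℝ × ℝ => u p.1 p.2))
    (hper : ∀ x t, u (x + 2 * π) t = u x t)
    (hpde : ∀ x t,
      deriv (fun s => u x s) t
        - deriv (fun s => deriv (fun y => deriv (fun y' => u y' s) y) x) t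
        + deriv (fun y => u y t) x
        + u x t * deriv (fun y => u y t) x = 0) :
    ∀ t₁ t₂ : ℝ,
      (∫ x in (0:ℝ)..(2 * π), (u x t₁) ^ 3 + 3 * (u x t₁) ^ 2)
        = ∫ x in (0:ℝ)..(2 * π), (u x t₂) ^ 3 + 3 * (u x t₂) ^ 2 := by
  intro t₁ t₂
  set U : ℝ × ℝ → ℝ := fun p => u p.1 p.2 with hUdef
  have hperU : ∀ x t, U (x + 2 * π, t) = U (x, t) := fun x t => hper x t
  have hrel : ∀ p : ℝ × ℝ, pt U p = px (px (pt U)) p - px U p - U p * px U p := by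
    rintro ⟨x, t⟩
    have h := hpde x t
    have d1 : deriv (fun s => u x s) t = pt U (x, t) :=
      (hasDerivAt_slice_t hsmooth x t).deriv
    have d2 : deriv (fun y => u y t) x = px U (x, t) :=
      (hasDerivAt_slice_x hsmooth x t).deriv
    have e1 : ∀ s : ℝ, (fun y => deriv (fun y' => u y' s) y) = fun y => px U (y, s) := by
      intro s; funext y; exact (hasDerivAt_slice_x hsmooth y s).deriv
    have e2 : (fun s => deriv (fun y => deriv (fun y' => u y' s) y) x)
        = fun s => px (px U) (x, s) := by
      funext s
      rw [e1 s]
      exact (hasDerivAt_slice_x (contDiff_px hsmooth) x s).deriv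
    have d3 : deriv (fun s => deriv (fun y => deriv (fun y' => u y' s) y) x) t
        = pt (px (px U)) (x, t) := by
      rw [e2]
      exact (hasDerivAt_slice_t (contDiff_px (contDiff_px hsmooth)) x t).deriv
    have swap : pt (px (px U)) (x, t) = px (px (pt U)) (x, t) := by
      have s1 : pt (px (px U)) (x, t) = px (pt (px U)) (x, t) :=
        (px_pt_comm (contDiff_px hsmooth) (x, t)).symm
      have s2 : pt (px U) = px (pt U) := funext fun p => (px_pt_comm hsmooth p).symm
      rw [s1, s2]
    rw [d1, d3, d2, swap] at h
    have hval : U (x, t) = u x t := rfl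
    rw [hval]
    linarith
  have hF : ∀ t : ℝ,
      HasDerivAt (fun s => ∫ x in (0:ℝ)..(2 * π), ((U (x, s)) ^ 3 + 3 * (U (x, s)) ^ 2)) 0 t :=
    fun t => bbm_key U hsmooth hperU hrel t
  have hconst := is_const_of_deriv_eq_zero
    (f := fun s => ∫ x in (0:ℝ)..(2 * π), ((U (x, s)) ^ 3 + 3 * (U (x, s)) ^ 2))
    (fun t => (hF t).differentiableAt) (fun t => (hF t).deriv) t₁ t₂
  exact hconst
end

section
/- Let u ∈ C¹((0,T); L¹(ℝ, e^{|x|}dx)) be compactly supported in x, uniformly in t, and satisfy (1+ξ²)û_t(ξ,t) = -iξ(û(ξ,t) + λ û(ξ,t)²) for all real ξ and t ∈ (0,T), where λ ≠ 0. Then for each t, either û(i,t) = 0 or û(i,t) = -1/λ, where û(i,t) = ∫_ℝ u(x,t)eˣ dx. -/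
open Real MeasureTheory Complex Filter Set Topology

/-!
For fixed `t`, `Φ(t, z) = ∫ u(x,t) e^{-izx} dx` is entire in `z` because `u(·,t)` has compact
support. Fix `t₀`. Off the countably many real zeros of `Φ + λΦ²`, the equation at a real
frequency `ξ ≠ 0` is a genuine Riccati equation `Φ' = c(ξ)(Φ + λΦ²)` with
`c(z) = -iz/(1+z²)`, so `Φ/(1+λΦ)` grows like `e^{c(ξ)t}` for a short time. A countable
pigeonhole gives one later time `t₁` for which
`e^{c(ξ)(t₁-t₀)} Φ(t₀,ξ)(1+λΦ(t₁,ξ)) = Φ(t₁,ξ)(1+λΦ(t₀,ξ))` holds on an uncountable set of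
real `ξ`, hence, by the identity theorem, at every `z ≠ ±i`. On the path `z = si` the symbol
`c(si) = s/(1-s²)` is real and tends to `+∞` as `s ↑ 1` and to `-∞` as `s ↓ 1`; the two
limits give `a(1+λb) = 0 = b(1+λa)` for `a = Φ(t₀,i)`, `b = Φ(t₁,i)`, hence `a(1+λa) = 0`.
-/

theorem AnalyticOnNhd.eqOn_of_preconnected_of_not_countable {𝕜 E : Type*}
    [NontriviallyNormedField 𝕜] [SecondCountableTopology 𝕜] [NormedAddCommGroup E]
    [NormedSpace 𝕜 E] {f g : 𝕜 → E} {U : Set 𝕜} (hf : AnalyticOnNhd 𝕜 f U)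
    (hg : AnalyticOnNhd 𝕜 g U) (hU : IsPreconnected U)
    (hfg : ¬{z ∈ U | f z = g z}.Countable) : EqOn f g U := by
  set S := {z ∈ U | f z = g z}
  obtain ⟨z, hzS, hacc⟩ : ∃ z ∈ S, AccPt z (𝓟 S) := by
    by_contra! h
    exact hfg ((HereditarilyLindelofSpace.isLindelof S).countable (discreteTopology_of_noAccPts h))
  exact hf.eqOn_of_preconnected_of_frequently_eq hg hU hzS.1
    ((accPt_iff_frequently_nhdsNE.1 hacc).mono fun _ hw => hw.2)

theorem AnalyticOnNhd.eqOn_of_not_countable_real {E : Type*} [NormedAddCommGroup E]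
    [NormedSpace ℂ E] {f g : ℂ → E} {U : Set ℂ} (hf : AnalyticOnNhd ℂ f U)
    (hg : AnalyticOnNhd ℂ g U) (hU : IsPreconnected U) (hRU : ∀ x : ℝ, (x : ℂ) ∈ U)
    (hfg : ¬{x : ℝ | f x = g x}.Countable) : EqOn f g U :=
  hf.eqOn_of_preconnected_of_not_countable hg hU fun h =>
    hfg <| (h.preimage ofReal_injective).mono fun x (hx : f x = g x) =>
      show (x : ℂ) ∈ U ∧ _ from ⟨hRU x, hx⟩

theorem exists_not_countable_of_forall_eventually {α β : Type*} {l : Filter β}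
    [l.IsCountablyGenerated] [l.NeBot] {A : Set α} (hA : ¬A.Countable) {p : β → α → Prop}
    (h : ∀ x ∈ A, ∀ᶠ b in l, p b x) : ∃ b, ¬{x ∈ A | p b x}.Countable := by
  obtain ⟨u, hu⟩ := exists_seq_tendsto l
  by_contra! hcount
  refine hA ((countable_iUnion fun n => hcount (u n)).mono fun x hx => ?_)
  obtain ⟨n, hn⟩ := (hu.eventually (h x hx)).exists
  exact mem_iUnion.2 ⟨n, hx, hn⟩

theorem hasDerivAt_of_mul_deriv_eq {𝕜 F : Type*} [NontriviallyNormedField 𝕜] [NormedField F]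
    [NormedSpace 𝕜 F] {f : 𝕜 → F} {t : 𝕜} {a b : F} (h : a * deriv f t = b)
    (hb : b ≠ 0) : HasDerivAt f (b / a) t := by
  have hd : deriv f t ≠ 0 := by rintro hd; rw [hd, mul_zero] at h; exact hb h.symm
  have ha : a ≠ 0 := by rintro rfl; rw [zero_mul] at h; exact hb h.symm
  rw [← h, mul_div_cancel_left₀ _ ha]
  exact (differentiableAt_of_deriv_ne_zero hd).hasDerivAt

theorem riccati_relation {φ : ℝ → ℂ} {c lam : ℂ} {a b : ℝ} (hab : a ≤ b)
    (hφ : ∀ s ∈ Icc a b, HasDerivAt φ (c * (φ s + lam * φ s ^ 2)) s)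
    (hφ' : ∀ s ∈ Icc a b, 1 + lam * φ s ≠ 0) :
    cexp (c * (b - a : ℝ)) * (φ a * (1 + lam * φ b)) = φ b * (1 + lam * φ a) := by
  -- `φ / (1 + λφ)` solves the linear equation `ψ' = c ψ`.
  set ψ : ℝ → ℂ := fun s => cexp (-(c * (s - a : ℝ))) * (φ s / (1 + lam * φ s))
  have hψ : ∀ s ∈ Icc a b, HasDerivAt ψ 0 s := by
    intro s hs
    have hlin : HasDerivAt (fun r : ℝ => -(c * (r - a : ℝ))) (-c) s := by
      simpa using (((hasDerivAt_id s).sub_const a).ofReal_comp.const_mul c).fun_neg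
    have hq := (hφ s hs).fun_div (((hφ s hs).const_mul lam).const_add 1) (hφ' s hs)
    refine (hlin.cexp.fun_mul hq).congr_deriv ?_
    field_simp [hφ' s hs]
    ring
  have hconst := constant_of_has_deriv_right_zero
    (fun s hs => (hψ s hs).continuousAt.continuousWithinAt)
    (fun s hs => (hψ s (Ico_subset_Icc_self hs)).hasDerivWithinAt) b (right_mem_Icc.2 hab)
  simp only [ψ, sub_self, ofReal_zero, mul_zero, Complex.exp_neg, Complex.exp_zero, inv_one,
    one_mul] at hconst
  rw [← mul_div_assoc, inv_mul_eq_div, div_div, div_eq_div_iff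
    (mul_ne_zero (Complex.exp_ne_zero _) (hφ' b (right_mem_Icc.2 hab)))
    (hφ' a (left_mem_Icc.2 hab))] at hconst
  linear_combination -hconst

theorem eventually_riccati_relation {φ : ℝ → ℂ} {c lam : ℂ} {J : Set ℝ} (hJ : IsOpen J)
    (hφ : ∀ t ∈ J, φ t + lam * φ t ^ 2 ≠ 0 →
      HasDerivAt φ (c * (φ t + lam * φ t ^ 2)) t)
    {t₀ : ℝ} (ht₀ : t₀ ∈ J) (h₀ : φ t₀ + lam * φ t₀ ^ 2 ≠ 0) :
    ∀ᶠ t₁ in 𝓝[>] t₀, t₁ ∈ J ∧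
      cexp (c * (t₁ - t₀ : ℝ)) * (φ t₀ * (1 + lam * φ t₁))
        = φ t₁ * (1 + lam * φ t₀) := by
  have hcont : ContinuousAt φ t₀ := (hφ t₀ ht₀ h₀).continuousAt
  have hgood : ∀ᶠ t in 𝓝 t₀, t ∈ J ∧ φ t + lam * φ t ^ 2 ≠ 0 :=
    (hJ.eventually_mem ht₀).and
      ((hcont.add (continuousAt_const.mul (hcont.pow 2))).eventually_ne h₀)
  obtain ⟨l, r, ⟨hl, hr⟩, hlr⟩ := mem_nhds_iff_exists_Ioo_subset.1 hgood
  filter_upwards [Ioo_mem_nhdsGT hr] with t₁ ht₁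
  have hsub : Icc t₀ t₁ ⊆ Ioo l r := Icc_subset_Ioo hl ht₁.2
  refine ⟨(hlr (hsub (right_mem_Icc.2 ht₁.1.le))).1, riccati_relation ht₁.1.le
    (fun s hs => hφ s (hlr (hsub hs)).1 (hlr (hsub hs)).2) fun s hs => ?_⟩
  have hs' := (hlr (hsub hs)).2
  exact right_ne_zero_of_mul (a := φ s) (by rwa [mul_add, mul_one, mul_left_comm, ← sq])

noncomputable def bbmSymbol (z : ℂ) : ℂ := -I * z / (1 + z ^ 2)

theorem one_add_sq_ne_zero_of_mem_compl_I_negI {z : ℂ} (hz : z ∈ ({I, -I} : Set ℂ)ᶜ) :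
    1 + z ^ 2 ≠ 0 := by
  intro h
  have : (z - I) * (z + I) = 0 := by linear_combination h - I_sq
  simp_all [sub_eq_zero, add_eq_zero_iff_eq_neg]

theorem differentiableOn_bbmSymbol : DifferentiableOn ℂ bbmSymbol ({I, -I} : Set ℂ)ᶜ :=
  fun z hz => ((by fun_prop : DifferentiableAt ℂ (fun z : ℂ => -I * z) z).div
    (by fun_prop : DifferentiableAt ℂ (fun z : ℂ => 1 + z ^ 2) z)
    (one_add_sq_ne_zero_of_mem_compl_I_negI hz)).differentiableWithinAt

theorem isPreconnected_compl_I_negI : IsPreconnected ({I, -I} : Set ℂ)ᶜ :=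
  (((countable_singleton _).insert _).isConnected_compl_of_one_lt_rank
    (by simp [rank_real_complex])).isPreconnected

theorem ofReal_mul_I_mem_compl_I_negI {s : ℝ} (hs : 0 < s) (hs1 : s ≠ 1) :
    (s * I : ℂ) ∈ ({I, -I} : Set ℂ)ᶜ := by
  rintro (h | h) <;> have := congrArg im h <;> simp at this
  exacts [hs1 this, by linarith]

theorem ofReal_mem_compl_I_negI (x : ℝ) : (x : ℂ) ∈ ({I, -I} : Set ℂ)ᶜ := by
  rintro (h | h) <;> simpa using congrArg im h

theorem bbmSymbol_ofReal_mul_I (s : ℝ) : bbmSymbol (s * I) = (s / (1 - s ^ 2) : ℝ) := by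
  push_cast
  rw [bbmSymbol, mul_pow, I_sq]
  ring_nf
  rw [I_sq]
  ring

theorem tendsto_div_one_sub_sq_nhdsLT_one :
    Tendsto (fun s : ℝ => s / (1 - s ^ 2)) (𝓝[<] 1) atTop := by
  have hden : Tendsto (fun s : ℝ => 1 - s ^ 2) (𝓝[<] 1) (𝓝[>] 0) := by
    refine tendsto_nhdsWithin_iff.2 ⟨?_, ?_⟩
    · exact tendsto_nhdsWithin_of_tendsto_nhds
        ((show Continuous fun s : ℝ => 1 - s ^ 2 by fun_prop).tendsto' 1 0 (by norm_num))
    · filter_upwards [Ioo_mem_nhdsLT (zero_lt_one' ℝ)] with s hs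
      exact mem_Ioi.2 (by nlinarith [hs.1, hs.2])
  exact (tendsto_nhdsWithin_of_tendsto_nhds tendsto_id).pos_mul_atTop one_pos
    (tendsto_inv_nhdsGT_zero.comp hden)

theorem tendsto_div_one_sub_sq_nhdsGT_one :
    Tendsto (fun s : ℝ => s / (1 - s ^ 2)) (𝓝[>] 1) atBot := by
  have hden : Tendsto (fun s : ℝ => 1 - s ^ 2) (𝓝[>] 1) (𝓝[<] 0) := by
    refine tendsto_nhdsWithin_iff.2 ⟨?_, ?_⟩
    · exact tendsto_nhdsWithin_of_tendsto_nhds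
        ((show Continuous fun s : ℝ => 1 - s ^ 2 by fun_prop).tendsto' 1 0 (by norm_num))
    · filter_upwards [self_mem_nhdsWithin] with s hs
      exact mem_Iio.2 (by nlinarith [mem_Ioi.1 hs])
  exact (tendsto_nhdsWithin_of_tendsto_nhds tendsto_id).pos_mul_atBot one_pos
    (tendsto_inv_nhdsLT_zero.comp hden)

theorem tendsto_cexp_ofReal_atBot : Tendsto (fun r : ℝ => cexp r) atBot (𝓝 0) :=
  tendsto_exp_comap_re_atBot.comp
    (tendsto_comap_iff.2 (tendsto_id.congr fun r => (ofReal_re r).symm))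

theorem eq_zero_of_cexp_bbmSymbol_mul_eq {A B : ℂ → ℂ} {Δ : ℝ} (hΔ : 0 < Δ)
    (hA : ContinuousAt A I) (hB : ContinuousAt B I)
    (h : ∀ s : ℝ, 0 < s → s ≠ 1 → cexp (bbmSymbol (s * I) * Δ) * A (s * I) = B (s * I)) :
    A I = 0 ∧ B I = 0 := by
  have hpath : Tendsto (fun s : ℝ => (s * I : ℂ)) (𝓝 1) (𝓝 I) := by
    simpa using (show Continuous fun s : ℝ => (s * I : ℂ) by fun_prop).tendsto 1
  have hexp (s : ℝ) : cexp (bbmSymbol (s * I) * Δ) = cexp (s / (1 - s ^ 2) * Δ : ℝ) := by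
    rw [bbmSymbol_ofReal_mul_I, ofReal_mul]
  have hpos : ∀ᶠ s in 𝓝 (1 : ℝ), 0 < s := lt_mem_nhds one_pos
  constructor
  · have hlim := (tendsto_cexp_ofReal_atBot.comp (tendsto_neg_atTop_atBot.comp
      (tendsto_div_one_sub_sq_nhdsLT_one.atTop_mul_const hΔ))).mul
      ((hB.tendsto.comp hpath).mono_left nhdsWithin_le_nhds)
    rw [zero_mul] at hlim
    refine tendsto_nhds_unique ((hA.tendsto.comp hpath).mono_left nhdsWithin_le_nhds)
      (hlim.congr' ?_)
    filter_upwards [nhdsWithin_le_nhds hpos, self_mem_nhdsWithin] with s hs hs1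
    simp only [Function.comp_apply, ← h s hs (ne_of_lt hs1), hexp, ← mul_assoc,
      ← Complex.exp_add, ofReal_neg, neg_add_cancel, Complex.exp_zero, one_mul]
  · have hlim := (tendsto_cexp_ofReal_atBot.comp
      (tendsto_div_one_sub_sq_nhdsGT_one.atBot_mul_const hΔ)).mul
      ((hA.tendsto.comp hpath).mono_left nhdsWithin_le_nhds)
    rw [zero_mul] at hlim
    refine tendsto_nhds_unique ((hB.tendsto.comp hpath).mono_left nhdsWithin_le_nhds)
      (hlim.congr' ?_)
    filter_upwards [nhdsWithin_le_nhds hpos, self_mem_nhdsWithin] with s hs hs1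
    simp only [Function.comp_apply, ← h s hs (ne_of_gt hs1), hexp]

theorem mul_one_add_eq_zero_at_I_of_riccati_relation {f g : ℂ → ℂ} {lam : ℂ} {Δ : ℝ}
    (hΔ : 0 < Δ) (hf : Differentiable ℂ f) (hg : Differentiable ℂ g)
    (hfg : ¬{ξ : ℝ | cexp (bbmSymbol ξ * Δ) * (f ξ * (1 + lam * g ξ))
      = g ξ * (1 + lam * f ξ)}.Countable) :
    f I * (1 + lam * g I) = 0 ∧ g I * (1 + lam * f I) = 0 := by
  have hU : IsOpen ({I, -I} : Set ℂ)ᶜ := ((finite_singleton _).insert _).isClosed.isOpen_compl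
  have hEq : EqOn (fun z => cexp (bbmSymbol z * Δ) * (f z * (1 + lam * g z)))
      (fun z => g z * (1 + lam * f z)) ({I, -I} : Set ℂ)ᶜ :=
    AnalyticOnNhd.eqOn_of_not_countable_real
      (((differentiableOn_bbmSymbol.mul_const _).cexp.mul
        (hf.differentiableOn.mul ((hg.differentiableOn.const_mul _).const_add _))).analyticOnNhd hU)
      ((hg.mul ((hf.const_mul _).const_add _)).differentiableOn.analyticOnNhd hU)
      isPreconnected_compl_I_negI ofReal_mem_compl_I_negI hfg
  have hfc := hf.continuous
  have hgc := hg.continuous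
  exact eq_zero_of_cexp_bbmSymbol_mul_eq (A := fun z => f z * (1 + lam * g z))
    (B := fun z => g z * (1 + lam * f z)) hΔ (by fun_prop) (by fun_prop)
    fun s hs hs1 => hEq (ofReal_mul_I_mem_compl_I_negI hs hs1)

theorem not_countable_setOf_ne_zero_of_differentiable {f : ℂ → ℂ} (hf : Differentiable ℂ f)
    {z₀ : ℂ} (hz₀ : f z₀ ≠ 0) : ¬{ξ : ℝ | ξ ≠ 0 ∧ f ξ ≠ 0}.Countable := by
  have hZ : {ξ : ℝ | f ξ = 0}.Countable := by
    by_contra hZ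
    exact hz₀ ((hf.differentiableOn.analyticOnNhd isOpen_univ).eqOn_of_not_countable_real
      analyticOnNhd_const isPreconnected_univ (fun _ => mem_univ _) hZ (mem_univ z₀))
  refine fun hA => not_countable_univ <|
    (hA.union ((countable_singleton 0).union hZ)).mono fun ξ _ => ?_
  by_cases h0 : ξ = 0 <;> by_cases hf0 : f ξ = 0 <;> simp_all

theorem hasDerivAt_of_one_add_sq_mul_deriv_eq {φ : ℝ → ℂ} {ξ t : ℝ} {P : ℂ}
    (hξ : ξ ≠ 0) (hP : P ≠ 0) (h : (1 + (ξ : ℂ) ^ 2) * deriv φ t = -I * ξ * P) :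
    HasDerivAt φ (bbmSymbol ξ * P) t := by
  refine (hasDerivAt_of_mul_deriv_eq h
    (mul_ne_zero (mul_ne_zero (neg_ne_zero.2 I_ne_zero) (ofReal_ne_zero.2 hξ)) hP)).congr_deriv ?_
  rw [bbmSymbol]
  ring

theorem riccati_family_mul_one_add_eq_zero_at_I {J : Set ℝ} (hJ : IsOpen J) {lam : ℂ}
    {Φ : ℝ → ℂ → ℂ} (hΦ : ∀ t ∈ J, Differentiable ℂ (Φ t))
    (hode : ∀ ξ : ℝ, ∀ t ∈ J, (1 + (ξ : ℂ) ^ 2) * deriv (fun s => Φ s ξ) t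
      = -I * ξ * (Φ t ξ + lam * Φ t ξ ^ 2))
    {t₀ : ℝ} (ht₀ : t₀ ∈ J) : Φ t₀ I * (1 + lam * Φ t₀ I) = 0 := by
  by_cases hPI : Φ t₀ I + lam * Φ t₀ I ^ 2 = 0
  · linear_combination hPI
  have hA := not_countable_setOf_ne_zero_of_differentiable
    (f := fun z => Φ t₀ z + lam * Φ t₀ z ^ 2)
    ((hΦ t₀ ht₀).add (((hΦ t₀ ht₀).pow 2).const_mul lam)) hPI
  obtain ⟨t₁, ht₁⟩ := exists_not_countable_of_forall_eventually hA fun ξ hξ =>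
    (eventually_riccati_relation hJ (fun t ht hPt =>
      hasDerivAt_of_one_add_sq_mul_deriv_eq hξ.1 hPt (hode ξ t ht)) ht₀ hξ.2).and
      self_mem_nhdsWithin
  obtain ⟨-, -, ⟨ht₁J, -⟩, ht₀₁⟩ :=
    (show Set.Infinite _ from fun h => ht₁ h.countable).nonempty
  obtain ⟨h₀₁, h₁₀⟩ := mul_one_add_eq_zero_at_I_of_riccati_relation (lam := lam)
    (sub_pos.2 ht₀₁) (hΦ t₀ ht₀) (hΦ t₁ ht₁J)
    fun h => ht₁ (h.mono fun _ hξ => hξ.2.1.2)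
  linear_combination (1 + lam * Φ t₀ I) * h₀₁ - lam * Φ t₀ I * h₁₀

theorem norm_cexp_neg_I_mul_le {z : ℂ} {x L r : ℝ} (hx : |x| ≤ L) (hz : |z.im| ≤ r) :
    ‖cexp (-I * z * x)‖ ≤ Real.exp (r * L) := by
  rw [norm_exp, Real.exp_le_exp]
  calc (-I * z * x).re = z.im * x := by simp
    _ ≤ |z.im| * |x| := by rw [← abs_mul]; exact le_abs_self _
    _ ≤ r * L := mul_le_mul hz hx (abs_nonneg x) ((abs_nonneg _).trans hz)

theorem differentiable_integral_mul_cexp {v : ℝ → ℂ} {L : ℝ} (hv : Integrable v)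
    (hs : ∀ x : ℝ, L < |x| → v x = 0) :
    Differentiable ℂ fun z : ℂ => ∫ x : ℝ, v x * cexp (-I * z * x) := by
  intro z₀
  have hmeas (z : ℂ) : AEStronglyMeasurable (fun x : ℝ => v x * cexp (-I * z * x)) :=
    hv.1.mul (by fun_prop : Continuous fun x : ℝ => cexp (-I * z * x)).aestronglyMeasurable
  have hint : Integrable fun x : ℝ => v x * cexp (-I * z₀ * x) := by
    refine (hv.norm.mul_const (Real.exp (|z₀.im| * L))).mono' (hmeas z₀)
      (ae_of_all _ fun x => ?_)
    rcases le_or_gt |x| L with hx | hx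
    · rw [norm_mul]
      exact mul_le_mul_of_nonneg_left (norm_cexp_neg_I_mul_le hx le_rfl) (norm_nonneg _)
    · simp [hs x hx]
  have hbound : ∀ x : ℝ, ∀ z ∈ Metric.ball z₀ 1,
      ‖v x * (cexp (-I * z * x) * (-I * x))‖
        ≤ ‖v x‖ * (Real.exp ((|z₀.im| + 1) * L) * L) := by
    intro x z hz
    rcases le_or_gt |x| L with hx | hx
    · have hzim : |z.im| ≤ |z₀.im| + 1 := by
        have := abs_im_le_norm (z - z₀)
        rw [sub_im] at this
        linarith [abs_sub_abs_le_abs_sub z.im z₀.im, mem_ball_iff_norm.1 hz]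
      rw [norm_mul, norm_mul, norm_mul, norm_neg, norm_I, one_mul, norm_real, Real.norm_eq_abs]
      gcongr
      exact norm_cexp_neg_I_mul_le hx hzim
    · simp [hs x hx]
  refine (hasDerivAt_integral_of_dominated_loc_of_deriv_le (Metric.ball_mem_nhds z₀ one_pos)
    (Eventually.of_forall hmeas) hint (hv.1.mul (by fun_prop : Continuous fun x : ℝ =>
      cexp (-I * z₀ * x) * (-I * x)).aestronglyMeasurable) (ae_of_all _ hbound)
    (hv.norm.mul_const _) (ae_of_all _ fun x z _ => ?_)).2.differentiableAt
  simpa using ((((hasDerivAt_id z).const_mul (-I)).mul_const (x : ℂ)).cexp).const_mul (v x)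

theorem MeasureTheory.Integrable.of_mul_exp_abs {f : ℝ → ℝ}
    (hf : Integrable fun x => f x * Real.exp |x|) : Integrable f := by
  have hmeas : AEStronglyMeasurable f := by
    have hf_eq : f = fun x => f x * Real.exp |x| * Real.exp (-|x|) := by
      ext x
      rw [mul_assoc, ← Real.exp_add, add_neg_cancel, Real.exp_zero, mul_one]
    rw [hf_eq]
    exact hf.1.mul (by fun_prop : Continuous fun x : ℝ => Real.exp (-|x|)).aestronglyMeasurable
  refine hf.mono hmeas (ae_of_all _ fun x => ?_)
  rw [norm_mul, Real.norm_of_nonneg (Real.exp_pos _).le]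
  exact le_mul_of_one_le_right (norm_nonneg _) (Real.one_le_exp (abs_nonneg x))

theorem nonlocal_bbm_alternative_at_i_general (T lam L : ℝ) (hlam : lam ≠ 0)
    (u : ℝ → ℝ → ℝ)
    (hint : ∀ t ∈ Set.Ioo 0 T, Integrable (fun x : ℝ => u x t * Real.exp |x|))
    (hsupp : ∀ x t, t ∈ Set.Ioo 0 T → L < |x| → u x t = 0)
    (hode : ∀ (ξ : ℝ), ∀ t ∈ Set.Ioo 0 T,
      (1 + (ξ : ℂ) ^ 2) *
          deriv (fun s => ∫ x : ℝ, (u x s : ℂ) * Complex.exp (-Complex.I * ξ * x)) t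
        = -Complex.I * ξ *
            ((∫ x : ℝ, (u x t : ℂ) * Complex.exp (-Complex.I * ξ * x))
              + lam * (∫ x : ℝ, (u x t : ℂ) * Complex.exp (-Complex.I * ξ * x)) ^ 2)) :
    ∀ t ∈ Set.Ioo 0 T,
      (∫ x : ℝ, (u x t : ℂ) * (Real.exp x : ℂ)) = 0 ∨
      (∫ x : ℝ, (u x t : ℂ) * (Real.exp x : ℂ)) = -1 / (lam : ℂ) := by
  intro t ht
  have hentire (s : ℝ) (hs : s ∈ Ioo 0 T) :
      Differentiable ℂ fun z : ℂ => ∫ x : ℝ, (u x s : ℂ) * cexp (-I * z * x) :=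
    differentiable_integral_mul_cexp (hint s hs).of_mul_exp_abs.ofReal
      fun x hx => by rw [hsupp x s hs hx, ofReal_zero]
  have key := riccati_family_mul_one_add_eq_zero_at_I isOpen_Ioo hentire hode ht
  have hI : (fun x : ℝ => (u x t : ℂ) * cexp (-I * I * x))
      = fun x => (u x t : ℂ) * (Real.exp x : ℂ) := by
    ext x; simp [ofReal_exp]
  simp only [hI] at key
  rcases mul_eq_zero.1 key with h | h
  · exact Or.inl h
  · refine Or.inr (eq_div_of_mul_eq (ofReal_ne_zero.2 hlam) ?_)
    linear_combination h

/-- Let `u` be `C¹` in time, compactly supported in `x` uniformly in `t`, integrable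
against `e^{|x|}dx`, and suppose its Fourier transform in `x` satisfies
`(1+ξ²) û_t(ξ,t) = -iξ (û(ξ,t) + λ û(ξ,t)²)` for all real `ξ` and `t ∈ (0,T)`, with
`λ ≠ 0`. Then for each `t ∈ (0,T)`, either `û(i,t) = 0` or `û(i,t) = -1/λ`, where
`û(i,t) = ∫_ℝ u(x,t) eˣ dx`. -/
theorem nonlocal_bbm_alternative_at_i (T lam L : ℝ) (hT : 0 < T) (hlam : lam ≠ 0)
    (hL : 0 < L)
    (u : ℝ → ℝ → ℝ)
    (hreg : ∀ x, ContDiff ℝ 1 (fun t => u x t))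
    (hint : ∀ t ∈ Set.Ioo 0 T, Integrable (fun x : ℝ => u x t * Real.exp |x|))
    (hsupp : ∀ x t, t ∈ Set.Ioo 0 T → L < |x| → u x t = 0)
    (hode : ∀ (ξ : ℝ), ∀ t ∈ Set.Ioo 0 T,
      (1 + (ξ : ℂ) ^ 2) *
          deriv (fun s => ∫ x : ℝ, (u x s : ℂ) * Complex.exp (-Complex.I * ξ * x)) t
        = -Complex.I * ξ *
            ((∫ x : ℝ, (u x t : ℂ) * Complex.exp (-Complex.I * ξ * x))
              + lam * (∫ x : ℝ, (u x t : ℂ) * Complex.exp (-Complex.I * ξ * x)) ^ 2)) :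
    ∀ t ∈ Set.Ioo 0 T,
      (∫ x : ℝ, (u x t : ℂ) * (Real.exp x : ℂ)) = 0 ∨
      (∫ x : ℝ, (u x t : ℂ) * (Real.exp x : ℂ)) = -1 / (lam : ℂ) :=
  nonlocal_bbm_alternative_at_i_general T lam L hlam u hint hsupp hode
end

section
/- Let s ≥ 0. For any w ∈ H^r(𝕋) and v ∈ H^{r'}(𝕋) with 0 ≤ r ≤ s, 0 ≤ r' ≤ s, and 0 ≤ 2s - r - r' < 1/4, there is a constant c depending only on r, r', s such that ‖(1-∂x²)^{-1}∂x(wv)‖_{H^s} ≤ c ‖w‖_{H^r} ‖v‖_{H^{r'}}. -/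
/-!
Put `t = min r r'`; the hypotheses give `0 ≤ t` and `s - t < 1/4`. Peetre's inequality
`⟨k⟩^t ≤ 2^{t/2} ⟨j⟩^t ⟨k-j⟩^t` (with `⟨k⟩² = 1 + k²`) and Cauchy–Schwarz in `j` bound every
coefficient of the product: `⟨k⟩^{2t} |(wv)_k|² ≤ 2^t ‖w‖²_{H^t} ‖v‖²_{H^t}`. The symbol
`ik/(1+k²)` gains a full power of `⟨k⟩`, so the `H^s` norm of the left side is at most that
bound times `∑_k ⟨k⟩^{2(s-1-t)}`, which converges because `s - 1 - t < -1/2`.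
-/

open Real

theorem sq_tsum_mul_le_of_nonneg {ι : Type*} {f g : ι → ℝ} (hf : ∀ i, 0 ≤ f i)
    (hg : ∀ i, 0 ≤ g i) (hf_sum : Summable fun i => f i ^ 2)
    (hg_sum : Summable fun i => g i ^ 2) :
    (Summable fun i => f i * g i) ∧
      (∑' i, f i * g i) ^ 2 ≤ (∑' i, f i ^ 2) * ∑' i, g i ^ 2 := by
  simp_rw [← Real.rpow_two] at hf_sum hg_sum ⊢
  obtain ⟨hfg, hle⟩ := summable_and_inner_le_Lp_mul_Lq_tsum_of_nonneg HolderConjugate.two_two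
    hf hg hf_sum hg_sum
  refine ⟨hfg, ?_⟩
  have hF : 0 ≤ ∑' i, f i ^ (2 : ℝ) := tsum_nonneg fun i => rpow_nonneg (hf i) _
  have hG : 0 ≤ ∑' i, g i ^ (2 : ℝ) := tsum_nonneg fun i => rpow_nonneg (hg i) _
  rw [← sqrt_eq_rpow, ← sqrt_eq_rpow] at hle
  calc (∑' i, f i * g i) ^ (2 : ℝ)
      ≤ (√(∑' i, f i ^ (2 : ℝ)) * √(∑' i, g i ^ (2 : ℝ))) ^ (2 : ℝ) :=
        rpow_le_rpow (tsum_nonneg fun i => mul_nonneg (hf i) (hg i)) hle zero_le_two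
    _ = _ := by rw [rpow_two, mul_pow, sq_sqrt hF, sq_sqrt hG]

theorem rpow_half_sq {x : ℝ} (hx : 0 ≤ x) (t : ℝ) : (x ^ (t / 2)) ^ 2 = x ^ t := by
  rw [← rpow_mul_natCast hx]
  norm_num

theorem peetre_one_add_sq (x y : ℝ) : 1 + y ^ 2 ≤ 2 * (1 + x ^ 2) * (1 + (y - x) ^ 2) := by
  nlinarith [sq_nonneg (2 * x - y), sq_nonneg (x * (y - x))]

theorem peetre_one_add_sq_rpow {p : ℝ} (hp : 0 ≤ p) (x y : ℝ) :
    (1 + y ^ 2) ^ p ≤ 2 ^ p * (1 + x ^ 2) ^ p * (1 + (y - x) ^ 2) ^ p := by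
  rw [← mul_rpow (by positivity) (by positivity), ← mul_rpow (by positivity) (by positivity)]
  exact rpow_le_rpow (by positivity) (peetre_one_add_sq x y) hp

theorem summable_one_add_sq_rpow {e : ℝ} (he : e < -(1 / 2)) :
    Summable fun k : ℤ => (1 + (k : ℝ) ^ 2) ^ e := by
  refine .of_norm_bounded_eventually (summable_abs_int_rpow (b := -(2 * e)) (by linarith)) ?_
  filter_upwards [(Set.finite_singleton (0 : ℤ)).compl_mem_cofinite] with k hk
  have hk : (k : ℝ) ≠ 0 := by simpa using hk
  rw [norm_of_nonneg (by positivity), neg_neg, rpow_mul (abs_nonneg _), rpow_two, sq_abs]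
  exact rpow_le_rpow_of_nonpos (by positivity) (by linarith) (by linarith)

theorem sq_tsum_conv_le {a b : ℤ → ℝ} (ha : ∀ j, 0 ≤ a j) (hb : ∀ j, 0 ≤ b j)
    (ha_sum : Summable fun j => a j ^ 2) (hb_sum : Summable fun j => b j ^ 2) (k : ℤ) :
    (Summable fun j => a j * b (k - j)) ∧
      (∑' j, a j * b (k - j)) ^ 2 ≤ (∑' j, a j ^ 2) * ∑' j, b j ^ 2 := by
  have hb_sum' : Summable fun j => b (k - j) ^ 2 :=
    (Equiv.subLeft k).summable_iff.mpr hb_sum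
  have hb_tsum : ∑' j, b (k - j) ^ 2 = ∑' j, b j ^ 2 :=
    (Equiv.subLeft k).tsum_eq fun j => b j ^ 2
  rw [← hb_tsum]
  exact sq_tsum_mul_le_of_nonneg ha (fun j => hb _) ha_sum hb_sum'

theorem norm_I_mul_div_one_add_sq_sq_le (x : ℝ) :
    ‖Complex.I * (x : ℂ) / (1 + (x : ℂ) ^ 2)‖ ^ 2 ≤ (1 + x ^ 2)⁻¹ := by
  have hx : (0 : ℝ) < 1 + x ^ 2 := by positivity
  rw [show (1 : ℂ) + (x : ℂ) ^ 2 = ((1 + x ^ 2 : ℝ) : ℂ) by push_cast; ring, norm_div,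
    norm_mul, Complex.norm_I, one_mul, Complex.norm_real, Complex.norm_real, norm_of_nonneg hx.le,
    div_pow, Real.norm_eq_abs, sq_abs, div_le_iff₀ (by positivity), sq (1 + x ^ 2),
    inv_mul_cancel_left₀ hx.ne']
  linarith

section Sobolev

/-- `‖u‖²_{H^s}` for the function on `𝕋` with Fourier coefficients `u`. -/
noncomputable def sobolevNormSq (s : ℝ) (u : ℤ → ℂ) : ℝ :=
  ∑' k : ℤ, (1 + (k : ℝ) ^ 2) ^ s * ‖u k‖ ^ 2

def MemSobolev (s : ℝ) (u : ℤ → ℂ) : Prop :=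
  Summable fun k : ℤ => (1 + (k : ℝ) ^ 2) ^ s * ‖u k‖ ^ 2

theorem sobolevNormSq_nonneg (s : ℝ) (u : ℤ → ℂ) : 0 ≤ sobolevNormSq s u :=
  tsum_nonneg fun k => by positivity

variable {a b : ℝ} {u : ℤ → ℂ}

theorem one_add_sq_rpow_mul_le (hab : a ≤ b) (k : ℤ) :
    (1 + (k : ℝ) ^ 2) ^ a * ‖u k‖ ^ 2 ≤ (1 + (k : ℝ) ^ 2) ^ b * ‖u k‖ ^ 2 := by
  gcongr
  nlinarith [sq_nonneg (k : ℝ)]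

theorem MemSobolev.mono (hab : a ≤ b) (hu : MemSobolev b u) : MemSobolev a u :=
  hu.of_nonneg_of_le (fun k => by positivity) (one_add_sq_rpow_mul_le hab)

theorem sobolevNormSq_mono (hab : a ≤ b) (hu : MemSobolev b u) :
    sobolevNormSq a u ≤ sobolevNormSq b u :=
  (hu.mono hab).tsum_le_tsum (one_add_sq_rpow_mul_le hab) hu

end Sobolev

noncomputable def weightedCoeff (t : ℝ) (u : ℤ → ℂ) (j : ℤ) : ℝ :=
  (1 + (j : ℝ) ^ 2) ^ (t / 2) * ‖u j‖

theorem weightedCoeff_nonneg (t : ℝ) (u : ℤ → ℂ) (j : ℤ) : 0 ≤ weightedCoeff t u j := by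
  unfold weightedCoeff
  positivity

theorem weightedCoeff_sq (t : ℝ) (u : ℤ → ℂ) (j : ℤ) :
    weightedCoeff t u j ^ 2 = (1 + (j : ℝ) ^ 2) ^ t * ‖u j‖ ^ 2 := by
  rw [weightedCoeff, mul_pow, rpow_half_sq (by positivity)]

theorem one_add_sq_rpow_half_mul_norm_mul_le {t : ℝ} (ht : 0 ≤ t) (w v : ℤ → ℂ) (j k : ℤ) :
    (1 + (k : ℝ) ^ 2) ^ (t / 2) * ‖w j * v (k - j)‖
      ≤ 2 ^ (t / 2) * (weightedCoeff t w j * weightedCoeff t v (k - j)) := by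
  have h := peetre_one_add_sq_rpow (by positivity : 0 ≤ t / 2) (j : ℝ) (k : ℝ)
  rw [← Int.cast_sub] at h
  calc (1 + (k : ℝ) ^ 2) ^ (t / 2) * ‖w j * v (k - j)‖
      ≤ 2 ^ (t / 2) * (1 + (j : ℝ) ^ 2) ^ (t / 2) * (1 + ((k - j : ℤ) : ℝ) ^ 2) ^ (t / 2)
          * (‖w j‖ * ‖v (k - j)‖) := by
        rw [norm_mul]
        gcongr
    _ = 2 ^ (t / 2) * (weightedCoeff t w j * weightedCoeff t v (k - j)) := by
        rw [weightedCoeff, weightedCoeff]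
        ring

theorem one_add_sq_rpow_mul_norm_tsum_conv_sq_le {t : ℝ} (ht : 0 ≤ t) {w v : ℤ → ℂ}
    (hw : MemSobolev t w) (hv : MemSobolev t v) (k : ℤ) :
    (1 + (k : ℝ) ^ 2) ^ t * ‖∑' j, w j * v (k - j)‖ ^ 2
      ≤ 2 ^ t * sobolevNormSq t w * sobolevNormSq t v := by
  obtain ⟨hsum, hCS⟩ := sq_tsum_conv_le (weightedCoeff_nonneg t w) (weightedCoeff_nonneg t v)
    (by simp only [weightedCoeff_sq]; exact hw) (by simp only [weightedCoeff_sq]; exact hv) k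
  simp only [weightedCoeff_sq] at hCS
  have hpeetre := fun j => one_add_sq_rpow_half_mul_norm_mul_le ht w v j k
  have hone : 1 ≤ (1 + (k : ℝ) ^ 2) ^ (t / 2) := one_le_rpow (by nlinarith) (by positivity)
  have hnorm : Summable fun j => ‖w j * v (k - j)‖ :=
    (hsum.mul_left _).of_nonneg_of_le (fun j => norm_nonneg _)
      fun j => (le_mul_of_one_le_left (norm_nonneg _) hone).trans (hpeetre j)
  have hbound : (1 + (k : ℝ) ^ 2) ^ (t / 2) * ‖∑' j, w j * v (k - j)‖
      ≤ 2 ^ (t / 2) * ∑' j, weightedCoeff t w j * weightedCoeff t v (k - j) := by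
    rw [← tsum_mul_left]
    refine (mul_le_mul_of_nonneg_left (norm_tsum_le_tsum_norm hnorm) (by positivity)).trans ?_
    rw [← tsum_mul_left]
    exact (hnorm.mul_left _).tsum_le_tsum hpeetre (hsum.mul_left _)
  calc (1 + (k : ℝ) ^ 2) ^ t * ‖∑' j, w j * v (k - j)‖ ^ 2
      = ((1 + (k : ℝ) ^ 2) ^ (t / 2) * ‖∑' j, w j * v (k - j)‖) ^ 2 := by
        rw [mul_pow, rpow_half_sq (by positivity)]
    _ ≤ (2 ^ (t / 2) * ∑' j, weightedCoeff t w j * weightedCoeff t v (k - j)) ^ 2 := by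
        gcongr
    _ = 2 ^ t * (∑' j, weightedCoeff t w j * weightedCoeff t v (k - j)) ^ 2 := by
        rw [mul_pow, rpow_half_sq zero_le_two]
    _ ≤ 2 ^ t * sobolevNormSq t w * sobolevNormSq t v := by
        rw [mul_assoc]
        exact mul_le_mul_of_nonneg_left hCS (by positivity)

theorem one_add_sq_rpow_mul_norm_bbm_sq_le {s t : ℝ} (ht : 0 ≤ t) {w v : ℤ → ℂ}
    (hw : MemSobolev t w) (hv : MemSobolev t v) (k : ℤ) :
    (1 + (k : ℝ) ^ 2) ^ s *
        ‖(Complex.I * (k : ℂ) / (1 + (k : ℂ) ^ 2)) * ∑' j : ℤ, w j * v (k - j)‖ ^ 2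
      ≤ 2 ^ t * sobolevNormSq t w * sobolevNormSq t v * (1 + (k : ℝ) ^ 2) ^ (s - 1 - t) := by
  have hx : (0 : ℝ) < 1 + (k : ℝ) ^ 2 := by positivity
  have hsymbol := norm_I_mul_div_one_add_sq_sq_le (k : ℝ)
  push_cast at hsymbol
  calc (1 + (k : ℝ) ^ 2) ^ s *
        ‖(Complex.I * (k : ℂ) / (1 + (k : ℂ) ^ 2)) * ∑' j : ℤ, w j * v (k - j)‖ ^ 2
      ≤ (1 + (k : ℝ) ^ 2) ^ s * (1 + (k : ℝ) ^ 2)⁻¹ * ‖∑' j : ℤ, w j * v (k - j)‖ ^ 2 := by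
        rw [norm_mul, mul_pow, ← mul_assoc]
        gcongr
    _ = (1 + (k : ℝ) ^ 2) ^ (s - 1 - t) *
          ((1 + (k : ℝ) ^ 2) ^ t * ‖∑' j : ℤ, w j * v (k - j)‖ ^ 2) := by
        rw [← mul_assoc, ← rpow_add hx, sub_add_cancel, rpow_sub_one hx.ne', div_eq_mul_inv]
    _ ≤ _ := by
        rw [mul_comm _ ((1 + (k : ℝ) ^ 2) ^ (s - 1 - t))]
        exact mul_le_mul_of_nonneg_left (one_add_sq_rpow_mul_norm_tsum_conv_sq_le ht hw hv k)
          (by positivity)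

theorem tsum_one_add_sq_rpow_mul_norm_bbm_sq_le {s t : ℝ} (ht : 0 ≤ t) (hst : s < t + 1 / 2)
    {w v : ℤ → ℂ} (hw : MemSobolev t w) (hv : MemSobolev t v) :
    (∑' k : ℤ, (1 + (k : ℝ) ^ 2) ^ s *
        ‖(Complex.I * (k : ℂ) / (1 + (k : ℂ) ^ 2)) * ∑' j : ℤ, w j * v (k - j)‖ ^ 2)
      ≤ 2 ^ t * sobolevNormSq t w * sobolevNormSq t v *
          ∑' k : ℤ, (1 + (k : ℝ) ^ 2) ^ (s - 1 - t) := by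
  have hK := (summable_one_add_sq_rpow (e := s - 1 - t) (by linarith)).mul_left
    (2 ^ t * sobolevNormSq t w * sobolevNormSq t v)
  have hterm := one_add_sq_rpow_mul_norm_bbm_sq_le (s := s) ht hw hv
  rw [← tsum_mul_left]
  exact (hK.of_nonneg_of_le (fun k => by positivity) hterm).tsum_le_tsum hterm hK

theorem bbm_bilinear_estimate_general (s r r' : ℝ)
    (hr : 0 ≤ r) (hr' : 0 ≤ r') (hrs : r ≤ s) (hr's : r' ≤ s)
    (hgap : 2 * s - r - r' < 1 / 4) :
    ∃ c > (0:ℝ), ∀ w v : ℤ → ℂ,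
      Summable (fun k : ℤ => (1 + (k : ℝ) ^ 2) ^ r * ‖w k‖ ^ 2) →
      Summable (fun k : ℤ => (1 + (k : ℝ) ^ 2) ^ r' * ‖v k‖ ^ 2) →
      (∑' k : ℤ, (1 + (k : ℝ) ^ 2) ^ s *
          ‖(Complex.I * (k : ℂ) / (1 + (k : ℂ) ^ 2)) * ∑' j : ℤ, w j * v (k - j)‖ ^ 2)
        ≤ c ^ 2 * (∑' k : ℤ, (1 + (k : ℝ) ^ 2) ^ r * ‖w k‖ ^ 2)
            * (∑' k : ℤ, (1 + (k : ℝ) ^ 2) ^ r' * ‖v k‖ ^ 2) := by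
  set t := min r r'
  have ht : 0 ≤ t := le_min hr hr'
  have hst : s < t + 1 / 2 := by
    have : s - 1 / 2 < t := lt_min (by linarith) (by linarith)
    linarith
  set K := ∑' k : ℤ, (1 + (k : ℝ) ^ 2) ^ (s - 1 - t)
  have hK : 0 < K :=
    (summable_one_add_sq_rpow (by linarith)).tsum_pos (fun k => by positivity) 0 (by norm_num)
  refine ⟨√(2 ^ t * K), by positivity, fun w v hw hv => ?_⟩
  rw [sq_sqrt (by positivity)]
  calc _ ≤ 2 ^ t * sobolevNormSq t w * sobolevNormSq t v * K :=
        tsum_one_add_sq_rpow_mul_norm_bbm_sq_le ht hst (MemSobolev.mono (min_le_left r r') hw)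
          (MemSobolev.mono (min_le_right r r') hv)
    _ = 2 ^ t * K * (sobolevNormSq t w * sobolevNormSq t v) := by ring
    _ ≤ 2 ^ t * K * (sobolevNormSq r w * sobolevNormSq r' v) := by
        gcongr 2 ^ t * K * ?_
        exact mul_le_mul (sobolevNormSq_mono (min_le_left r r') hw)
          (sobolevNormSq_mono (min_le_right r r') hv) (sobolevNormSq_nonneg t v)
          (sobolevNormSq_nonneg r w)
    _ = 2 ^ t * K * sobolevNormSq r w * sobolevNormSq r' v := by ring

/-- Bilinear smoothing estimate for the BBM nonlinearity on the torus, stated on the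
Fourier side: for `0 ≤ r ≤ s`, `0 ≤ r' ≤ s` with `0 ≤ 2s - r - r' < 1/4`, there is a
constant `c` such that `‖(1-∂x²)⁻¹∂x(wv)‖_{H^s} ≤ c ‖w‖_{H^r} ‖v‖_{H^{r'}}`
(stated with squared norms; the product has Fourier coefficients given by the
convolution `∑_j w_j v_{k-j}` and the operator multiplies the `k`-th coefficient by
`ik/(1+k²)`). -/
theorem bbm_bilinear_estimate (s r r' : ℝ)
    (hr : 0 ≤ r) (hr' : 0 ≤ r') (hrs : r ≤ s) (hr's : r' ≤ s)
    (hgap0 : 0 ≤ 2 * s - r - r') (hgap : 2 * s - r - r' < 1 / 4) :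
    ∃ c > (0:ℝ), ∀ w v : ℤ → ℂ,
      Summable (fun k : ℤ => (1 + (k : ℝ) ^ 2) ^ r * ‖w k‖ ^ 2) →
      Summable (fun k : ℤ => (1 + (k : ℝ) ^ 2) ^ r' * ‖v k‖ ^ 2) →
      (∑' k : ℤ, (1 + (k : ℝ) ^ 2) ^ s *
          ‖(Complex.I * (k : ℂ) / (1 + (k : ℂ) ^ 2)) * ∑' j : ℤ, w j * v (k - j)‖ ^ 2)
        ≤ c ^ 2 * (∑' k : ℤ, (1 + (k : ℝ) ^ 2) ^ r * ‖w k‖ ^ 2)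
            * (∑' k : ℤ, (1 + (k : ℝ) ^ 2) ^ r' * ‖v k‖ ^ 2) :=
  bbm_bilinear_estimate_general s r r' hr hr' hrs hr's hgap
end
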